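/- arXiv:2410.21464 — 4 statements merged into one kernel-verified Lean document; each statement's English description precedes it below -/
import Mathlib

section
/- Under a completely randomized design, the variance of the difference-in-means estimator decomposes as Var_Z[τ̂] = S1²/N1 + S0²/N0 − Sτ²/N, where S1², S0² are the finite-population variances of the treated and control potential outcomes and Sτ² is the finite-population variance of the unit-level treatment effects. -/
open Finset

/-- Expectation over the completely randomized design: uniform over subsets of
size `N1` of the `N` units. -/
noncomputable def crExp (N N1 : ℕ) (f : Finset (Fin N) → ℝ) : ℝ :=
  (∑ S ∈ (Finset.univ : Finset (Fin N)).powersetCard N1, f S) /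
    ((Finset.univ : Finset (Fin N)).powersetCard N1).card

/-- Design variance of a statistic of the assignment. -/
noncomputable def crVarOf (N N1 : ℕ) (f : Finset (Fin N) → ℝ) : ℝ :=
  crExp N N1 (fun S => (f S - crExp N N1 f) ^ 2)

section Aux

variable {α : Type*} [Fintype α] [DecidableEq α]

lemma card_filter_subset_powersetCard (A : Finset α) (k : ℕ) (hA : A.card ≤ k) :
    (((univ : Finset α).powersetCard k).filter (fun S => A ⊆ S)).card
      = (Fintype.card α - A.card).choose (k - A.card) := by
  have : (((univ : Finset α).powersetCard k).filter (fun S => A ⊆ S)).card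
      = (Aᶜ.powersetCard (k - A.card)).card := by
    apply Finset.card_bij (fun S _ => S \ A)
    · intro S hS
      simp only [mem_filter, mem_powersetCard] at hS
      obtain ⟨⟨-, hcard⟩, hAS⟩ := hS
      rw [mem_powersetCard]
      constructor
      · intro x hx
        simp only [mem_sdiff] at hx
        simp [hx.2]
      · rw [card_sdiff_of_subset hAS, hcard]
    · intro S hS T hT h
      simp only [mem_filter, mem_powersetCard] at hS hT
      have : S \ A ∪ A = T \ A ∪ A := by rw [h]
      rwa [sdiff_union_of_subset hS.2, sdiff_union_of_subset hT.2] at this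
    · intro T hT
      rw [mem_powersetCard] at hT
      refine ⟨T ∪ A, ?_, ?_⟩
      · simp only [mem_filter, mem_powersetCard]
        have hdisj : Disjoint T A :=
          Finset.disjoint_left.2 fun x hxT hxA => (mem_compl.1 (hT.1 hxT)) hxA
        refine ⟨⟨subset_univ _, ?_⟩, subset_union_right⟩
        rw [card_union_of_disjoint hdisj, hT.2]
        omega
      · rw [union_sdiff_right, sdiff_eq_self_of_disjoint]
        exact Finset.disjoint_left.2 fun x hxT hxA => (mem_compl.1 (hT.1 hxT)) hxA
  rw [this, card_powersetCard, card_compl]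

lemma card_filter_mem_powersetCard (i : α) (k : ℕ) (hk : 1 ≤ k) :
    (((univ : Finset α).powersetCard k).filter (fun S => i ∈ S)).card
      = (Fintype.card α - 1).choose (k - 1) := by
  have := card_filter_subset_powersetCard ({i} : Finset α) k (by simpa using hk)
  simpa [singleton_subset_iff] using this

end Aux

lemma sum_powersetCard_sum (N k : ℕ) (hk : 1 ≤ k) (c : Fin N → ℝ) :
    ∑ S ∈ (univ : Finset (Fin N)).powersetCard k, ∑ i ∈ S, c i
      = ((N - 1).choose (k - 1) : ℝ) * ∑ i, c i := by
  have h1 : ∀ S ∈ (univ : Finset (Fin N)).powersetCard k,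
      ∑ i ∈ S, c i = ∑ i : Fin N, if i ∈ S then c i else 0 := by
    intro S _
    rw [Finset.sum_ite_mem, univ_inter]
  rw [Finset.sum_congr rfl h1, Finset.sum_comm]
  have h2 : ∀ i : Fin N,
      ∑ S ∈ (univ : Finset (Fin N)).powersetCard k, (if i ∈ S then c i else 0)
        = ((N - 1).choose (k - 1) : ℝ) * c i := by
    intro i
    rw [← Finset.sum_filter, Finset.sum_const, card_filter_mem_powersetCard i k hk,
      Fintype.card_fin, nsmul_eq_mul]
  rw [Finset.sum_congr rfl (fun i _ => h2 i), ← Finset.mul_sum]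

lemma sum_powersetCard_sum_sq (N k : ℕ) (hk : 1 ≤ k) (b : ℕ)
    (hb : ∀ i j : Fin N, i ≠ j →
      (((univ : Finset (Fin N)).powersetCard k).filter (fun S => i ∈ S ∧ j ∈ S)).card = b)
    (c : Fin N → ℝ) :
    ∑ S ∈ (univ : Finset (Fin N)).powersetCard k, (∑ i ∈ S, c i) ^ 2
      = (b : ℝ) * (∑ i, c i) ^ 2
        + (((N - 1).choose (k - 1) : ℝ) - b) * ∑ i, (c i) ^ 2 := by
  set 𝒮 := (univ : Finset (Fin N)).powersetCard k with h𝒮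
  have h1 : ∀ S ∈ 𝒮, (∑ i ∈ S, c i) ^ 2
      = ∑ i : Fin N, ∑ j : Fin N, (if i ∈ S ∧ j ∈ S then c i * c j else 0) := by
    intro S _
    rw [sq, Finset.sum_mul_sum]
    have hrow : ∀ i : Fin N, ∑ j : Fin N, (if i ∈ S ∧ j ∈ S then c i * c j else 0)
        = if i ∈ S then ∑ j ∈ S, c i * c j else 0 := by
      intro i
      by_cases hi : i ∈ S
      · simp only [hi, true_and, if_true]
        rw [Finset.sum_ite_mem, univ_inter]
      · simp [hi]
    rw [Finset.sum_congr rfl (fun i _ => hrow i), Finset.sum_ite_mem, univ_inter]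
  rw [Finset.sum_congr rfl h1, Finset.sum_comm]
  have h2 : ∀ i : Fin N,
      ∑ S ∈ 𝒮, ∑ j : Fin N, (if i ∈ S ∧ j ∈ S then c i * c j else 0)
        = (b : ℝ) * (c i * ∑ j, c j)
          + (((N - 1).choose (k - 1) : ℝ) - b) * (c i * c i) := by
    intro i
    rw [Finset.sum_comm]
    have h3 : ∀ j : Fin N,
        ∑ S ∈ 𝒮, (if i ∈ S ∧ j ∈ S then c i * c j else 0)
          = (if j = i then ((N - 1).choose (k - 1) : ℝ) else (b : ℝ)) * (c i * c j) := by
      intro j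
      rw [← Finset.sum_filter, Finset.sum_const, nsmul_eq_mul]
      by_cases hij : j = i
      · subst hij
        simp only [if_pos rfl, and_self]
        rw [card_filter_mem_powersetCard j k hk, Fintype.card_fin]
        simp
      · rw [if_neg hij, hb i j (fun h => hij (h.symm))]
    rw [Finset.sum_congr rfl (fun j _ => h3 j)]
    have h4 : ∀ j : Fin N,
        (if j = i then ((N - 1).choose (k - 1) : ℝ) else (b : ℝ)) * (c i * c j)
          = (b : ℝ) * (c i * c j)
            + (if j = i then (((N - 1).choose (k - 1) : ℝ) - b) * (c i * c i) else 0) := by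
      intro j
      by_cases hij : j = i
      · subst hij; rw [if_pos rfl, if_pos rfl]; ring
      · rw [if_neg hij, if_neg hij]; ring
    rw [Finset.sum_congr rfl (fun j _ => h4 j), Finset.sum_add_distrib, ← Finset.mul_sum,
      ← Finset.mul_sum, Finset.sum_ite_eq' univ i, if_pos (mem_univ i)]
  rw [Finset.sum_congr rfl (fun i _ => h2 i), Finset.sum_add_distrib, ← Finset.mul_sum,
    ← Finset.mul_sum]
  have e1 : ∑ i : Fin N, c i * ∑ j : Fin N, c j = (∑ i : Fin N, c i) ^ 2 := by
    rw [← Finset.sum_mul, sq]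
  have e2 : ∑ i : Fin N, c i * c i = ∑ i : Fin N, c i ^ 2 :=
    Finset.sum_congr rfl (fun i _ => (pow_two (c i)).symm)
  rw [e1, e2]

/-- Variance of a shifted sample total. -/
lemma crVarOf_total (N k : ℕ) (hk1 : 1 ≤ k) (hkN : k ≤ N) (b : ℕ)
    (hb : ∀ i j : Fin N, i ≠ j →
      (((univ : Finset (Fin N)).powersetCard k).filter (fun S => i ∈ S ∧ j ∈ S)).card = b)
    (c : Fin N → ℝ) (B : ℝ) :
    crVarOf N k (fun S => (∑ i ∈ S, c i) - B)
      = ((b : ℝ) * (∑ i, c i) ^ 2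
          + (((N - 1).choose (k - 1) : ℝ) - b) * ∑ i, (c i) ^ 2) / (N.choose k : ℝ)
        - (((N - 1).choose (k - 1) : ℝ) / (N.choose k : ℝ) * ∑ i, c i) ^ 2 := by
  have hcard : (((univ : Finset (Fin N)).powersetCard k).card : ℝ) = (N.choose k : ℝ) := by
    rw [card_powersetCard, card_univ, Fintype.card_fin]
  have hM : (N.choose k : ℝ) ≠ 0 := by
    exact_mod_cast (Nat.choose_pos hkN).ne'
  set a : ℝ := ((N - 1).choose (k - 1) : ℝ) with ha
  set M : ℝ := (N.choose k : ℝ) with hMdef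
  set sc : ℝ := ∑ i, c i with hsc
  set sc2 : ℝ := ∑ i, (c i) ^ 2 with hsc2
  have hmean : crExp N k (fun S => (∑ i ∈ S, c i) - B) = (a * sc - M * B) / M := by
    rw [crExp, Finset.sum_sub_distrib, sum_powersetCard_sum N k hk1 c, Finset.sum_const,
      nsmul_eq_mul, hcard]
  rw [crVarOf, hmean, crExp]
  rw [hcard]
  have hnum : ∑ S ∈ (univ : Finset (Fin N)).powersetCard k,
      ((∑ i ∈ S, c i) - B - (a * sc - M * B) / M) ^ 2
      = ((b : ℝ) * sc ^ 2 + (a - b) * sc2)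
        - 2 * (B + (a * sc - M * B) / M) * (a * sc)
        + M * (B + (a * sc - M * B) / M) ^ 2 := by
    have hpt : ∀ S : Finset (Fin N),
        ((∑ i ∈ S, c i) - B - (a * sc - M * B) / M) ^ 2
          = (∑ i ∈ S, c i) ^ 2
            - 2 * (B + (a * sc - M * B) / M) * (∑ i ∈ S, c i)
            + (B + (a * sc - M * B) / M) ^ 2 := fun S => by ring
    rw [Finset.sum_congr rfl (fun S _ => hpt S), Finset.sum_add_distrib,
      Finset.sum_sub_distrib, sum_powersetCard_sum_sq N k hk1 b hb c, ← Finset.mul_sum,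
      sum_powersetCard_sum N k hk1 c, Finset.sum_const, nsmul_eq_mul, hcard]
  rw [hnum]
  field_simp
  ring

theorem neyman_variance_decomposition (N N1 N0 : ℕ)
    (hN : N = N1 + N0) (hN1 : 1 ≤ N1) (hN0 : 1 ≤ N0)
    (Y0 Y1 : Fin N → ℝ)
    -- population means
    (Ybar0 Ybar1 tau : ℝ)
    (hYbar0 : Ybar0 = (∑ i, Y0 i) / N)
    (hYbar1 : Ybar1 = (∑ i, Y1 i) / N)
    (htau : tau = (∑ i, (Y1 i - Y0 i)) / N)
    -- finite population variances
    (S1sq S0sq Stausq : ℝ)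
    (hS1 : S1sq = (∑ i, (Y1 i - Ybar1) ^ 2) / ((N : ℝ) - 1))
    (hS0 : S0sq = (∑ i, (Y0 i - Ybar0) ^ 2) / ((N : ℝ) - 1))
    (hStau : Stausq = (∑ i, (Y1 i - Y0 i - tau) ^ 2) / ((N : ℝ) - 1)) :
    crVarOf N N1
      (fun S => (∑ i ∈ S, Y1 i) / N1 - (∑ i ∈ Sᶜ, Y0 i) / N0) =
      S1sq / N1 + S0sq / N0 - Stausq / N := by
  classical
  have h2N : 2 ≤ N := by omega
  have hN1N : N1 ≤ N := by omega
  have hN1R : (N1 : ℝ) ≠ 0 := Nat.cast_ne_zero.2 (by omega)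
  have hN0R : (N0 : ℝ) ≠ 0 := Nat.cast_ne_zero.2 (by omega)
  have hNR : (N : ℝ) ≠ 0 := Nat.cast_ne_zero.2 (by omega)
  have hNm1 : (N : ℝ) - 1 ≠ 0 := by
    have : (2 : ℝ) ≤ (N : ℝ) := by exact_mod_cast h2N
    linarith
  have hMR : ((N.choose N1 : ℕ) : ℝ) ≠ 0 := by
    exact_mod_cast (Nat.choose_pos hN1N).ne'
  -- relation for the single-inclusion count
  have e1 : N - 1 + 1 = N := by omega
  have e2 : N1 - 1 + 1 = N1 := by omega
  have h1 := Nat.add_one_mul_choose_eq (N - 1) (N1 - 1)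
  rw [e1, e2] at h1
  have haR : (((N - 1).choose (N1 - 1) : ℕ) : ℝ)
      = (N1 : ℝ) * ((N.choose N1 : ℕ) : ℝ) / (N : ℝ) := by
    rw [eq_div_iff hNR]
    have := congrArg (fun n : ℕ => (n : ℝ)) h1
    push_cast at this
    linarith
  -- the pair-inclusion count
  obtain ⟨b, hb, hbR⟩ : ∃ b : ℕ,
      (∀ i j : Fin N, i ≠ j → (((univ : Finset (Fin N)).powersetCard N1).filter
        (fun S => i ∈ S ∧ j ∈ S)).card = b) ∧
      ((b : ℕ) : ℝ) = (N1 : ℝ) * ((N1 : ℝ) - 1) * ((N.choose N1 : ℕ) : ℝ)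
        / ((N : ℝ) * ((N : ℝ) - 1)) := by
    rcases Nat.lt_or_ge N1 2 with h | h
    · have hN1e : N1 = 1 := by omega
      refine ⟨0, ?_, ?_⟩
      · intro i j hij
        rw [Finset.card_eq_zero, Finset.filter_eq_empty_iff]
        rintro S hS ⟨hi, hj⟩
        rw [mem_powersetCard] at hS
        have : 1 < S.card := Finset.one_lt_card.2 ⟨i, hi, j, hj, hij⟩
        omega
      · rw [hN1e]; norm_num
    · refine ⟨(N - 2).choose (N1 - 2), ?_, ?_⟩
      · intro i j hij
        have hAcard : ({i, j} : Finset (Fin N)).card = 2 := Finset.card_pair hij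
        have hkey := card_filter_subset_powersetCard ({i, j} : Finset (Fin N)) N1
          (by rw [hAcard]; omega)
        rw [hAcard, Fintype.card_fin] at hkey
        rw [← hkey]
        congr 1
        apply Finset.filter_congr
        intro S _
        simp [Finset.insert_subset_iff, and_comm]
      · have e3 : N - 2 + 1 = N - 1 := by omega
        have e4 : N1 - 2 + 1 = N1 - 1 := by omega
        have h2 := Nat.add_one_mul_choose_eq (N - 2) (N1 - 2)
        rw [e3, e4] at h2
        have key : N * ((N - 1) * (N - 2).choose (N1 - 2))
            = N.choose N1 * N1 * (N1 - 1) := by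
          rw [h2, ← Nat.mul_assoc, h1]
        have hc := congrArg (fun n : ℕ => (n : ℝ)) key
        push_cast [Nat.cast_sub (show 1 ≤ N by omega), Nat.cast_sub (show 1 ≤ N1 by omega)] at hc
        rw [eq_div_iff (mul_ne_zero hNR hNm1)]
        linarith [hc]
  -- rewrite the statistic as a shifted sample total
  set c : Fin N → ℝ := fun i => Y1 i / N1 + Y0 i / N0 with hcdef
  have hfun : (fun S : Finset (Fin N) =>
        (∑ i ∈ S, Y1 i) / (N1 : ℝ) - (∑ i ∈ Sᶜ, Y0 i) / (N0 : ℝ))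
      = fun S => (∑ i ∈ S, c i) - (∑ i, Y0 i) / (N0 : ℝ) := by
    funext S
    have hcompl : ∑ i ∈ Sᶜ, Y0 i = (∑ i, Y0 i) - ∑ i ∈ S, Y0 i := by
      rw [eq_sub_iff_add_eq, add_comm, Finset.sum_add_sum_compl]
    have hcS : ∑ i ∈ S, c i = (∑ i ∈ S, Y1 i) / (N1 : ℝ) + (∑ i ∈ S, Y0 i) / (N0 : ℝ) := by
      rw [hcdef]
      rw [Finset.sum_add_distrib, Finset.sum_div, Finset.sum_div]
    rw [hcompl, hcS]
    ring
  rw [hfun, crVarOf_total N N1 hN1 hN1N b hb c ((∑ i, Y0 i) / (N0 : ℝ))]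
  -- sum expansions
  have hsc : ∑ i, c i = (∑ i, Y1 i) / (N1 : ℝ) + (∑ i, Y0 i) / (N0 : ℝ) := by
    rw [hcdef]
    rw [Finset.sum_add_distrib, Finset.sum_div, Finset.sum_div]
  have hsc2 : ∑ i, (c i) ^ 2
      = (∑ i, (Y1 i) ^ 2) / (N1 : ℝ) ^ 2 + (∑ i, (Y0 i) ^ 2) / (N0 : ℝ) ^ 2
        + 2 * (∑ i, Y1 i * Y0 i) / ((N1 : ℝ) * (N0 : ℝ)) := by
    have hpt : ∀ i : Fin N, (c i) ^ 2
        = (Y1 i) ^ 2 / (N1 : ℝ) ^ 2 + (Y0 i) ^ 2 / (N0 : ℝ) ^ 2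
          + 2 * (Y1 i * Y0 i) / ((N1 : ℝ) * (N0 : ℝ)) := by
      intro i
      rw [hcdef]
      ring
    rw [Finset.sum_congr rfl (fun i _ => hpt i)]
    simp only [Finset.sum_add_distrib, Finset.sum_div, ← Finset.mul_sum, mul_div_assoc]
  have hA1 : ∑ i, (Y1 i - Ybar1) ^ 2
      = (∑ i, (Y1 i) ^ 2) - 2 * Ybar1 * (∑ i, Y1 i) + (N : ℝ) * Ybar1 ^ 2 := by
    have hpt : ∀ i : Fin N, (Y1 i - Ybar1) ^ 2
        = (Y1 i) ^ 2 - 2 * Ybar1 * Y1 i + Ybar1 ^ 2 := fun i => by ring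
    rw [Finset.sum_congr rfl (fun i _ => hpt i), Finset.sum_add_distrib,
      Finset.sum_sub_distrib, ← Finset.mul_sum, Finset.sum_const, card_univ,
      Fintype.card_fin, nsmul_eq_mul]
  have hA0 : ∑ i, (Y0 i - Ybar0) ^ 2
      = (∑ i, (Y0 i) ^ 2) - 2 * Ybar0 * (∑ i, Y0 i) + (N : ℝ) * Ybar0 ^ 2 := by
    have hpt : ∀ i : Fin N, (Y0 i - Ybar0) ^ 2
        = (Y0 i) ^ 2 - 2 * Ybar0 * Y0 i + Ybar0 ^ 2 := fun i => by ring
    rw [Finset.sum_congr rfl (fun i _ => hpt i), Finset.sum_add_distrib,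
      Finset.sum_sub_distrib, ← Finset.mul_sum, Finset.sum_const, card_univ,
      Fintype.card_fin, nsmul_eq_mul]
  have hAt : ∑ i, (Y1 i - Y0 i - tau) ^ 2
      = (∑ i, (Y1 i) ^ 2) + (∑ i, (Y0 i) ^ 2) - 2 * (∑ i, Y1 i * Y0 i)
        - 2 * tau * (∑ i, Y1 i) + 2 * tau * (∑ i, Y0 i) + (N : ℝ) * tau ^ 2 := by
    have hpt : ∀ i : Fin N, (Y1 i - Y0 i - tau) ^ 2
        = (Y1 i) ^ 2 + (Y0 i) ^ 2 - 2 * (Y1 i * Y0 i)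
          - 2 * tau * Y1 i + 2 * tau * Y0 i + tau ^ 2 := fun i => by ring
    rw [Finset.sum_congr rfl (fun i _ => hpt i)]
    simp only [Finset.sum_add_distrib, Finset.sum_sub_distrib, ← Finset.mul_sum,
      Finset.sum_const, card_univ, Fintype.card_fin, nsmul_eq_mul]
  have hdiff : ∑ i, (Y1 i - Y0 i) = (∑ i, Y1 i) - (∑ i, Y0 i) := Finset.sum_sub_distrib Y1 Y0
  have hNr : (N : ℝ) = (N1 : ℝ) + (N0 : ℝ) := by rw [hN]; push_cast; ring
  rw [hS1, hS0, hStau, hA1, hA0, hAt, hsc, hsc2, haR, hbR, hYbar0, hYbar1, htau, hdiff]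
  have hNm1' : (N1 : ℝ) + (N0 : ℝ) - 1 ≠ 0 := by rw [← hNr]; exact hNm1
  have hNR' : (N1 : ℝ) + (N0 : ℝ) ≠ 0 := by rw [← hNr]; exact hNR
  rw [hNr]
  field_simp
  ring
end

section
/- If N0 = N1 (equal-sized treatment and control groups) then the integer program constraints are feasible with slackness ε = 0: there exist binary variables X_{ik}^{(a)} satisfying (a) X_{ik}^{(Z_i)} = 1 iff Y_i^obs = y_k, (c) Σ_k X_{ik}^{(a)} = 1 for all i, a, and (d) Σ_i X_{ik}^{(a)}(Z_i/N1 − (1−Z_i)/N0) = 0 for all a, k. -/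
open Finset

theorem ip_feasible_eps_zero_when_balanced (N N1 N0 K : ℕ)
    (hN : N = N1 + N0) (hN1 : 1 ≤ N1) (hN0 : 1 ≤ N0) (hbal : N0 = N1)
    (Z : Fin N → Bool)
    (hcard1 : (Finset.univ.filter (fun i => Z i)).card = N1)
    (hcard0 : (Finset.univ.filter (fun i => ¬ Z i)).card = N0)
    (y : Fin K → ℝ) (hy : Function.Injective y)
    (Yobs : Fin N → ℝ) (hYobs : ∀ i, ∃ k, Yobs i = y k) :
    ∃ X : Bool → Fin N → Fin K → Bool,
      -- (a) the observed potential outcomes are fixed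
      (∀ i k, X (Z i) i k = true ↔ Yobs i = y k) ∧
      -- (c) one-hot constraints
      (∀ a i, ∑ k, (if X a i k then (1 : ℝ) else 0) = 1) ∧
      -- (d) exact marginal matching (slackness ε = 0)
      (∀ a k, ∑ i, (if X a i k then (1 : ℝ) else 0) *
          ((if Z i then (1 : ℝ) else 0) / N1 -
            (1 - if Z i then (1 : ℝ) else 0) / N0) = 0) := by
  classical
  subst hbal
  set T := Finset.univ.filter (fun i => Z i) with hT
  set C := Finset.univ.filter (fun i => ¬ Z i) with hC
  have hTC : T.card = C.card := by rw [hcard1, hcard0]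
  let e : (T : Finset (Fin N)) ≃ (C : Finset (Fin N)) := T.equivOfCardEq hTC
  have hmemT : ∀ i : Fin N, i ∈ T ↔ Z i = true := by
    intro i; simp [hT]
  have hmemC : ∀ i : Fin N, i ∈ C ↔ Z i = false := by
    intro i; simp [hC]
  let σ : Fin N → Fin N := fun i =>
    if h : Z i = true then (e ⟨i, (hmemT i).2 h⟩ : Fin N)
    else (e.symm ⟨i, (hmemC i).2 (by simpa using h)⟩ : Fin N)
  have hZσ : ∀ i, Z (σ i) = ! Z i := by
    intro i
    by_cases h : Z i = true
    · simp only [σ, dif_pos h, h]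
      exact (hmemC _).1 (e ⟨i, (hmemT i).2 h⟩).2
    · have hb : Z i = false := by simpa using h
      have h1 : Z (σ i) = true := by
        simp only [σ, dif_neg h]
        exact (hmemT _).1 (e.symm ⟨i, (hmemC i).2 hb⟩).2
      rw [h1, hb]; rfl
  have hσσ : Function.Involutive σ := by
    intro i
    by_cases h : Z i = true
    · have h1 : Z (σ i) = false := by rw [hZσ, h]; rfl
      have h2 : σ (σ i) = (e.symm ⟨σ i, (hmemC _).2 h1⟩ : Fin N) := by
        simp only [σ]
        rw [dif_neg (by rw [Bool.not_eq_true]; exact h1)]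
      rw [h2]
      have hσi : σ i = (e ⟨i, (hmemT i).2 h⟩ : Fin N) := by
        simp only [σ, dif_pos h]
      have h3 : (⟨σ i, (hmemC _).2 h1⟩ : (C : Finset (Fin N))) = e ⟨i, (hmemT i).2 h⟩ :=
        Subtype.ext hσi
      rw [h3, Equiv.symm_apply_apply]
    · have hb : Z i = false := by simpa using h
      have h1 : Z (σ i) = true := by rw [hZσ, hb]; rfl
      have h2 : σ (σ i) = (e ⟨σ i, (hmemT _).2 h1⟩ : Fin N) := by
        simp only [σ]
        rw [dif_pos h1]
      rw [h2]
      have hσi : σ i = (e.symm ⟨i, (hmemC i).2 hb⟩ : Fin N) := by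
        simp only [σ, dif_neg h]
      have h3 : (⟨σ i, (hmemT _).2 h1⟩ : (T : Finset (Fin N))) = e.symm ⟨i, (hmemC i).2 hb⟩ :=
        Subtype.ext hσi
      rw [h3, Equiv.apply_symm_apply]
  -- the imputation map
  let m : Bool → Fin N → Fin N := fun a i => if a = Z i then i else σ i
  refine ⟨fun a i k => decide (Yobs (m a i) = y k), ?_, ?_, ?_⟩
  · intro i k
    simp [m]
  · intro a i
    obtain ⟨k0, hk0⟩ := hYobs (m a i)
    have h1 : ∀ k : Fin K, (if decide (Yobs (m a i) = y k) then (1 : ℝ) else 0)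
        = if k = k0 then 1 else 0 := by
      intro k
      by_cases hk : k = k0
      · subst hk; simp [hk0]
      · have : Yobs (m a i) ≠ y k := by
          rw [hk0]; exact fun hc => hk (hy hc).symm
        simp [this, hk]
    rw [Finset.sum_congr rfl (fun k _ => h1 k)]
    simp
  · intro a k
    set f : Fin N → ℝ := fun i => (if decide (Yobs (m a i) = y k) then (1 : ℝ) else 0) *
          ((if Z i then (1 : ℝ) else 0) / N0 -
            (1 - if Z i then (1 : ℝ) else 0) / N0) with hf
    have hmσ : ∀ i, m a (σ i) = m a i := by
      intro i
      by_cases h : a = Z i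
      · have h2 : ¬ a = Z (σ i) := by
          rw [hZσ, h]; cases Z i <;> simp
        simp only [m]
        rw [if_neg h2, if_pos h, hσσ i]
      · have h2 : a = Z (σ i) := by
          rw [hZσ]; cases hz : Z i <;> cases a <;> simp_all
        simp only [m]
        rw [if_pos h2, if_neg h]
    have hkey : ∀ i, f (σ i) = - f i := by
      intro i
      have hw : ((if Z (σ i) then (1 : ℝ) else 0) / N0 -
            (1 - if Z (σ i) then (1 : ℝ) else 0) / N0)
          = -((if Z i then (1 : ℝ) else 0) / N0 -
            (1 - if Z i then (1 : ℝ) else 0) / N0) := by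
        rw [hZσ]; cases Z i <;> simp <;> ring
      simp only [hf, hmσ i, hw]
      ring
    have hsum : ∑ i, f i = ∑ i, f (σ i) :=
      (Equiv.sum_comp (Function.Involutive.toPerm σ hσσ) f).symm
    have hsum2 : ∑ i, f (σ i) = - ∑ i, f i := by
      rw [← Finset.sum_neg_distrib]
      exact Finset.sum_congr rfl fun i _ => hkey i
    have hz : ∑ i, f i = 0 := by linarith [hsum.trans hsum2]
    simpa [hf] using hz
end

section
/- The integer program constraints always admit a feasible solution when the slackness parameter satisfies ε ≥ 1/min(N0, N1): there exist binary variables X_{ik}^{(a)} satisfying the fixed-observed-outcome constraints, the one-hot constraints Σ_k X_{ik}^{(a)} = 1, and the marginal-matching constraints |Σ_i X_{ik}^{(a)}(Z_i/N1 − (1−Z_i)/N0)| ≤ ε for all a ∈ {0,1} and all k. -/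
open Finset

lemma card_fin_filter_Ico (M a b : ℕ) (hb : b ≤ M) :
    (univ.filter (fun t : Fin M => a ≤ t.val ∧ t.val < b)).card = b - a := by
  rw [← Nat.card_Ico a b]
  apply Finset.card_bij (fun t _ => t.val)
  · intro t ht
    simp only [mem_filter] at ht
    simp [Finset.mem_Ico, ht.2.1, ht.2.2]
  · intro t ht s hs h
    exact Fin.ext h
  · intro m hm
    simp only [Finset.mem_Ico] at hm
    exact ⟨⟨m, lt_of_lt_of_le hm.2 hb⟩, by simp [hm.1, hm.2], rfl⟩

lemma exists_balanced_fin (K M L : ℕ) (hM : 1 ≤ M) (hL : 1 ≤ L)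
    (n : Fin K → ℕ) (hn : ∑ k, n k = L) :
    ∃ f : Fin M → Fin K, ∀ k,
      |((univ.filter (fun t => f t = k)).card : ℝ) / M - (n k : ℝ) / L| ≤ 1 / M := by
  have hK : 0 < K := by
    by_contra h
    push_neg at h
    interval_cases K
    simp at hn; omega
  have hM0 : (0 : ℝ) < M := by exact_mod_cast hM
  have hL0 : (0 : ℝ) < L := by exact_mod_cast hL
  set n' : ℕ → ℕ := fun j => if h : j < K then n ⟨j, h⟩ else 0 with hn'
  set T : ℕ → ℕ := fun j => ∑ i ∈ Finset.range j, n' i with hT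
  have hTK : T K = L := by
    rw [hT, ← hn]
    simp only
    rw [Finset.sum_range fun i => n' i]
    apply Finset.sum_congr rfl
    intro i _
    simp [hn', i.isLt]
  have hTmono : Monotone T := by
    intro a b hab
    exact Finset.sum_le_sum_of_subset (Finset.range_subset_range.mpr hab)
  set C : ℕ → ℕ := fun j => ⌈(T j * M : ℝ) / L⌉₊ with hC
  have hC0 : C 0 = 0 := by simp [hC, hT]
  have hCK : C K = M := by
    have h1 : ((T K) * M : ℝ) / L = (M : ℝ) := by
      rw [hTK]; field_simp
    simp only [hC, h1, Nat.ceil_natCast]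
  have hCmono : Monotone C := by
    intro a b hab
    apply Nat.ceil_le_ceil
    have : (T a : ℝ) ≤ T b := by exact_mod_cast hTmono hab
    gcongr
  have hClb : ∀ j, (T j * M : ℝ) / L ≤ C j := fun j => Nat.le_ceil _
  have hCub : ∀ j, (C j : ℝ) < (T j * M : ℝ) / L + 1 := fun j =>
    Nat.ceil_lt_add_one (by positivity)
  set f : Fin M → Fin K := fun t =>
    ⟨Nat.findGreatest (fun j => C j ≤ t.val) (K - 1), by
      have := Nat.findGreatest_le (P := fun j => C j ≤ t.val) (K - 1)
      omega⟩ with hf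
  have key : ∀ t : Fin M, C (f t).val ≤ t.val ∧ t.val < C ((f t).val + 1) := by
    intro t
    constructor
    · exact Nat.findGreatest_spec (P := fun j => C j ≤ t.val) (Nat.zero_le _)
        (by simpa [hC0] using Nat.zero_le t.val)
    · by_contra hcon
      push_neg at hcon
      have hlt : (f t).val + 1 ≤ K - 1 ∨ (f t).val + 1 = K := by
        have := (f t).isLt; omega
      rcases hlt with h | h
      · exact Nat.findGreatest_is_greatest (P := fun j => C j ≤ t.val)
          (by simp [hf]) h hcon
      · have h2 : C K ≤ t.val := h ▸ hcon
        rw [hCK] at h2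
        exact absurd t.isLt (by omega)
  refine ⟨f, ?_⟩
  intro k
  have hset : univ.filter (fun t => f t = k) =
      univ.filter (fun t : Fin M => C k.val ≤ t.val ∧ t.val < C (k.val + 1)) := by
    ext t
    simp only [mem_filter, mem_univ, true_and]
    constructor
    · intro ht; exact ht ▸ key t
    · rintro ⟨h1, h2⟩
      obtain ⟨g1, g2⟩ := key t
      apply Fin.ext
      by_contra hne
      rcases Nat.lt_or_ge (f t).val k.val with h | h
      · have : C ((f t).val + 1) ≤ C k.val := hCmono (by omega)
        omega
      · have h' : k.val < (f t).val := by omega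
        have : C (k.val + 1) ≤ C (f t).val := hCmono (by omega)
        omega
  have hk1 : C (k.val + 1) ≤ M := hCK ▸ hCmono (by omega)
  rw [hset, card_fin_filter_Ico M _ _ hk1]
  have hnk : n k = T (k.val + 1) - T k.val := by
    simp only [hT]
    rw [Finset.sum_range_succ]
    simp [hn', k.isLt]
  have hle : C k.val ≤ C (k.val + 1) := hCmono (by omega)
  have hTle : T k.val ≤ T (k.val + 1) := hTmono (by omega)
  have e1 : ((C (k.val + 1) - C k.val : ℕ) : ℝ) = (C (k.val+1) : ℝ) - C k.val := by
    push_cast [hle]; ring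
  have e2 : ((n k : ℕ) : ℝ) = (T (k.val+1) : ℝ) - T k.val := by
    rw [hnk]; push_cast [hTle]; ring
  rw [e1, e2]
  set d : ℕ → ℝ := fun j => (C j : ℝ) - T j * M / L with hd
  have hd0 : ∀ j, 0 ≤ d j := fun j => by simp [hd]; linarith [hClb j]
  have hd1 : ∀ j, d j < 1 := fun j => by simp [hd]; linarith [hCub j]
  have hrw : ((C (k.val+1) : ℝ) - C k.val) / M - ((T (k.val+1) : ℝ) - T k.val) / L
      = (d (k.val+1) - d k.val) / M := by
    simp only [hd]
    field_simp
    ring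
  rw [hrw, abs_div, abs_of_pos hM0]
  gcongr
  exact abs_le.mpr ⟨by linarith [hd0 (k.val+1), hd1 k.val], by linarith [hd1 (k.val+1), hd0 k.val]⟩

lemma exists_balanced {α : Type*} [DecidableEq α] (S : Finset α) (hS : 1 ≤ S.card)
    (K L : ℕ) (hL : 1 ≤ L) (n : Fin K → ℕ) (hn : ∑ k, n k = L) :
    ∃ f : α → Fin K, ∀ k,
      |((S.filter (fun t => f t = k)).card : ℝ) / S.card - (n k : ℝ) / L| ≤ 1 / S.card := by
  have hK : 0 < K := by
    by_contra h
    push_neg at h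
    interval_cases K
    simp at hn; omega
  obtain ⟨g, hg⟩ := exists_balanced_fin K S.card L hS hL n hn
  set e := S.equivFin with he
  classical
  refine ⟨fun x => if h : x ∈ S then g (e ⟨x, h⟩) else g ⟨0, hS⟩, ?_⟩
  intro k
  have hcard : (S.filter (fun t => (if h : t ∈ S then g (e ⟨t, h⟩) else g ⟨0, hS⟩) = k)).card
      = (univ.filter (fun t => g t = k)).card := by
    apply Finset.card_bij (fun x hx => e ⟨x, (Finset.mem_filter.mp hx).1⟩)
    · intro x hx
      obtain ⟨h1, h2⟩ := Finset.mem_filter.mp hx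
      rw [dif_pos h1] at h2
      simp [h2]
    · intro x hx x' hx' hxy
      have := e.injective hxy
      exact Subtype.ext_iff.mp this
    · intro t ht
      refine ⟨(e.symm t).1, ?_, by simp⟩
      rw [Finset.mem_filter]
      refine ⟨(e.symm t).2, ?_⟩
      rw [dif_pos (e.symm t).2]
      simp only [Finset.mem_filter, mem_univ, true_and] at ht
      simpa using ht
  rw [hcard]
  exact hg k

theorem ip_feasible_for_eps_ge_inv_min (N N1 N0 K : ℕ)
    (hN : N = N1 + N0) (hN1 : 1 ≤ N1) (hN0 : 1 ≤ N0)
    (Z : Fin N → Bool)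
    (hcard1 : (Finset.univ.filter (fun i => Z i)).card = N1)
    (hcard0 : (Finset.univ.filter (fun i => ¬ Z i)).card = N0)
    (y : Fin K → ℝ) (hy : Function.Injective y)
    (Yobs : Fin N → ℝ) (hYobs : ∀ i, ∃ k, Yobs i = y k)
    (ε : ℝ) (hε : 1 / (min N0 N1 : ℝ) ≤ ε) :
    ∃ X : Bool → Fin N → Fin K → Bool,
      -- (a) the observed potential outcomes are fixed
      (∀ i k, X (Z i) i k = true ↔ Yobs i = y k) ∧
      -- (c) one-hot constraints
      (∀ a i, ∑ k, (if X a i k then (1 : ℝ) else 0) = 1) ∧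
      -- (d) approximate marginal matching with slackness ε
      (∀ a k, |∑ i, (if X a i k then (1 : ℝ) else 0) *
          ((if Z i then (1 : ℝ) else 0) / N1 -
            (1 - if Z i then (1 : ℝ) else 0) / N0)| ≤ ε) := by
  classical
  set κ : Fin N → Fin K := fun i => Classical.choose (hYobs i) with hκdef
  have hκ : ∀ i, Yobs i = y (κ i) := fun i => Classical.choose_spec (hYobs i)
  have hiff : ∀ i k, Yobs i = y k ↔ κ i = k := by
    intro i k
    constructor
    · intro h; exact hy (by rw [← hκ i, h])
    · intro h; rw [hκ i, h]
  set S1 := Finset.univ.filter (fun i => Z i) with hS1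
  set S0 := Finset.univ.filter (fun i => ¬ Z i) with hS0
  set n1 : Fin K → ℕ := fun k => (S1.filter (fun i => κ i = k)).card with hn1
  set n0 : Fin K → ℕ := fun k => (S0.filter (fun i => κ i = k)).card with hn0
  have hsum1 : ∑ k, n1 k = N1 := by
    rw [← hcard1]
    exact (Finset.card_eq_sum_card_fiberwise (fun x _ => Finset.mem_univ (κ x))).symm
  have hsum0 : ∑ k, n0 k = N0 := by
    rw [← hcard0]
    exact (Finset.card_eq_sum_card_fiberwise (fun x _ => Finset.mem_univ (κ x))).symm
  obtain ⟨f1, hf1⟩ := exists_balanced S0 (by rw [hcard0]; exact hN0) K N1 hN1 n1 hsum1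
  obtain ⟨f0, hf0⟩ := exists_balanced S1 (by rw [hcard1]; exact hN1) K N0 hN0 n0 hsum0
  rw [hcard0] at hf1
  rw [hcard1] at hf0
  refine ⟨fun a i k => if Z i = a then decide (Yobs i = y k)
    else decide ((if a then f1 i else f0 i) = k), ?_, ?_, ?_⟩
  · intro i k
    simp only [if_pos rfl]
    exact decide_eq_true_iff
  · intro a i
    by_cases h : Z i = a
    · simp only [h, eq_self_iff_true, if_true]
      have : ∀ k : Fin K, (if (decide (Yobs i = y k)) = true then (1:ℝ) else 0)
          = if κ i = k then 1 else 0 := by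
        intro k
        simp [hiff i k]
      simp_rw [this]
      simp
    · simp only [if_neg h]
      have : ∀ k : Fin K, (if (decide ((if a then f1 i else f0 i) = k)) = true then (1:ℝ) else 0)
          = if (if a then f1 i else f0 i) = k then 1 else 0 := by
        intro k; simp
      simp_rw [this]
      simp
  · intro a k
    have hN10 : (0:ℝ) < N1 := by exact_mod_cast hN1
    have hN00 : (0:ℝ) < N0 := by exact_mod_cast hN0
    have hmin : (0:ℝ) < (N0 : ℝ) ⊓ (N1 : ℝ) := lt_min hN00 hN10
    cases a
    · -- a = false : treated units get f0, controls fixed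
      have hsplit := Finset.sum_filter_add_sum_filter_not Finset.univ (fun i => Z i = true)
        (fun i => (if (if Z i = false then decide (Yobs i = y k)
          else decide ((if false = true then f1 i else f0 i) = k)) = true then (1 : ℝ) else 0) *
            ((if Z i then (1 : ℝ) else 0) / N1 - (1 - if Z i then (1 : ℝ) else 0) / N0))
      have hA : (∑ i ∈ S1, (if (if Z i = false then decide (Yobs i = y k)
          else decide ((if false = true then f1 i else f0 i) = k)) = true then (1 : ℝ) else 0) *
            ((if Z i then (1 : ℝ) else 0) / N1 - (1 - if Z i then (1 : ℝ) else 0) / N0))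
          = ((S1.filter (fun i => f0 i = k)).card : ℝ) * (1 / N1) := by
        rw [Finset.sum_congr rfl (g := fun i => if f0 i = k then (1:ℝ) * (1/N1) else 0)
          (fun i hi => ?_)]
        · rw [← Finset.sum_filter]
          simp [mul_comm]
        · have hz : Z i = true := by
            rw [hS1, Finset.mem_filter] at hi; exact hi.2
          by_cases hfk : f0 i = k <;> simp [hz, hfk]
      have hB : (∑ i ∈ S0, (if (if Z i = false then decide (Yobs i = y k)
          else decide ((if false = true then f1 i else f0 i) = k)) = true then (1 : ℝ) else 0) *
            ((if Z i then (1 : ℝ) else 0) / N1 - (1 - if Z i then (1 : ℝ) else 0) / N0))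
          = ((n0 k : ℝ)) * (-(1 / N0)) := by
        rw [Finset.sum_congr rfl (g := fun i => if κ i = k then (1:ℝ) * (-(1/N0)) else 0)
          (fun i hi => ?_)]
        · rw [← Finset.sum_filter]
          simp [hn0, mul_comm]
        · have hz : Z i = false := by
            rw [hS0, Finset.mem_filter] at hi
            simpa using hi.2
          by_cases hfk : κ i = k <;> simp [hz, hfk, hiff i k]
      rw [← hsplit, hA, hB]
      have habs : |((S1.filter (fun i => f0 i = k)).card : ℝ) * (1 / N1) + (n0 k : ℝ) * (-(1 / N0))|
          ≤ 1 / N1 := by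
        have heq : ((S1.filter (fun i => f0 i = k)).card : ℝ) * (1 / N1) + (n0 k : ℝ) * (-(1 / N0))
            = ((S1.filter (fun i => f0 i = k)).card : ℝ) / N1 - (n0 k : ℝ) / N0 := by ring
        rw [heq]
        exact hf0 k
      refine le_trans habs (le_trans ?_ hε)
      exact one_div_le_one_div_of_le hmin (min_le_right _ _)
    · -- a = true : controls get f1, treated fixed
      have hsplit := Finset.sum_filter_add_sum_filter_not Finset.univ (fun i => Z i = true)
        (fun i => (if (if Z i = true then decide (Yobs i = y k)
          else decide ((if true = true then f1 i else f0 i) = k)) = true then (1 : ℝ) else 0) *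
            ((if Z i then (1 : ℝ) else 0) / N1 - (1 - if Z i then (1 : ℝ) else 0) / N0))
      have hA : (∑ i ∈ S1, (if (if Z i = true then decide (Yobs i = y k)
          else decide ((if true = true then f1 i else f0 i) = k)) = true then (1 : ℝ) else 0) *
            ((if Z i then (1 : ℝ) else 0) / N1 - (1 - if Z i then (1 : ℝ) else 0) / N0))
          = ((n1 k : ℝ)) * (1 / N1) := by
        rw [Finset.sum_congr rfl (g := fun i => if κ i = k then (1:ℝ) * (1/N1) else 0)
          (fun i hi => ?_)]
        · rw [← Finset.sum_filter]
          simp [hn1, mul_comm]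
        · have hz : Z i = true := by
            rw [hS1, Finset.mem_filter] at hi; exact hi.2
          by_cases hfk : κ i = k <;> simp [hz, hfk, hiff i k]
      have hB : (∑ i ∈ S0, (if (if Z i = true then decide (Yobs i = y k)
          else decide ((if true = true then f1 i else f0 i) = k)) = true then (1 : ℝ) else 0) *
            ((if Z i then (1 : ℝ) else 0) / N1 - (1 - if Z i then (1 : ℝ) else 0) / N0))
          = ((S0.filter (fun i => f1 i = k)).card : ℝ) * (-(1 / N0)) := by
        rw [Finset.sum_congr rfl (g := fun i => if f1 i = k then (1:ℝ) * (-(1/N0)) else 0)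
          (fun i hi => ?_)]
        · rw [← Finset.sum_filter]
          simp [mul_comm]
        · have hz : Z i = false := by
            rw [hS0, Finset.mem_filter] at hi
            simpa using hi.2
          by_cases hfk : f1 i = k <;> simp [hz, hfk]
      rw [← hsplit, hA, hB]
      have habs : |(n1 k : ℝ) * (1 / N1) + ((S0.filter (fun i => f1 i = k)).card : ℝ) * (-(1 / N0))|
          ≤ 1 / N0 := by
        have heq : (n1 k : ℝ) * (1 / N1) + ((S0.filter (fun i => f1 i = k)).card : ℝ) * (-(1 / N0))
            = -(((S0.filter (fun i => f1 i = k)).card : ℝ) / N0 - (n1 k : ℝ) / N1) := by ring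
        rw [heq, abs_neg]
        exact hf1 k
      refine le_trans habs (le_trans ?_ hε)
      exact one_div_le_one_div_of_le hmin (min_le_left _ _)
end

section
/- Conditional exponential moment bound: if Z_1,...,Z_N are {0,1}-valued with P_i = P(Z_i=1) and N1 = Σ_i Z_i, then for any c > 0, E[exp(−c N1)] ≤ exp(−(c/2)Σ_i P_i) + (4/(Σ_i P_i)²)Σ_{i,j} Cov(Z_i, Z_j). -/
open Finset

/-- Expectation under the joint distribution `p` of the indicator vector. -/
def designExp {N : ℕ} (p : (Fin N → Bool) → ℝ) (f : (Fin N → Bool) → ℝ) : ℝ :=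
  ∑ z, p z * f z

/-- Real-valued treatment indicator. -/
def zr {N : ℕ} (z : Fin N → Bool) (i : Fin N) : ℝ := if z i then 1 else 0

theorem conditional_exponential_moment_bound (N : ℕ)
    (p : (Fin N → Bool) → ℝ) (hp : ∀ z, 0 ≤ p z) (hsum : ∑ z, p z = 1)
    (P : Fin N → ℝ) (hP : ∀ i, P i = designExp p (fun z => zr z i))
    (hPpos : 0 < ∑ i, P i)
    (Cov : Fin N → Fin N → ℝ)
    (hCov : ∀ i j, Cov i j = designExp p (fun z => zr z i * zr z j) - P i * P j)
    (c : ℝ) (hc : 0 < c) :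
    designExp p (fun z => Real.exp (-c * ∑ i, zr z i)) ≤
      Real.exp (-(c / 2) * ∑ i, P i) +
        (4 / (∑ i, P i) ^ 2) * ∑ i, ∑ j, Cov i j := by
  set S := ∑ i, P i with hS
  have hN1 : ∀ z : Fin N → Bool, (0:ℝ) ≤ ∑ i, zr z i := by
    intro z
    apply Finset.sum_nonneg
    intro i _
    unfold zr; split <;> norm_num
  -- E[N1] = S
  have hE1 : ∑ z, p z * (∑ i, zr z i) = S := by
    simp_rw [Finset.mul_sum]
    rw [Finset.sum_comm]
    simp only [hS]
    refine Finset.sum_congr rfl fun i _ => ?_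
    rw [hP i]; rfl
  -- E[N1^2] = ∑∑ E[zi zj]
  have hE2 : ∑ z, p z * (∑ i, zr z i)^2
      = ∑ i, ∑ j, ∑ z, p z * (zr z i * zr z j) := by
    have : ∀ z : Fin N → Bool, p z * (∑ i, zr z i)^2
        = ∑ i, ∑ j, p z * (zr z i * zr z j) := by
      intro z
      rw [sq, Finset.sum_mul_sum]
      rw [Finset.mul_sum]
      exact Finset.sum_congr rfl fun i _ => by rw [Finset.mul_sum]
    simp_rw [this]
    rw [Finset.sum_comm]
    exact Finset.sum_congr rfl fun i _ => by rw [Finset.sum_comm]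
  -- variance identity
  have hvar : ∑ z, p z * ((∑ i, zr z i) - S)^2 = ∑ i, ∑ j, Cov i j := by
    have lhs_eq : ∑ z, p z * ((∑ i, zr z i) - S)^2
        = (∑ z, p z * (∑ i, zr z i)^2) - 2*S*(∑ z, p z * (∑ i, zr z i))
          + S^2 * (∑ z, p z) := by
      have e : ∀ z : Fin N → Bool, p z * ((∑ i, zr z i) - S)^2
          = p z * (∑ i, zr z i)^2 - 2*S*(p z * (∑ i, zr z i)) + S^2 * p z :=
        fun z => by ring
      simp_rw [e]
      rw [Finset.sum_add_distrib, Finset.sum_sub_distrib, ← Finset.mul_sum,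
        ← Finset.mul_sum]
    have rhs_eq : ∑ i, ∑ j, Cov i j
        = (∑ i, ∑ j, ∑ z, p z * (zr z i * zr z j)) - S^2 := by
      simp_rw [hCov, designExp, Finset.sum_sub_distrib]
      congr 1
      rw [hS, sq, Finset.sum_mul_sum]
    rw [lhs_eq, hE1, hE2, hsum, rhs_eq]
    ring
  -- pointwise bound
  have key : ∀ z ∈ Finset.univ, p z * Real.exp (-c * ∑ i, zr z i)
      ≤ p z * (Real.exp (-(c/2)*S) + (4/S^2) * ((∑ i, zr z i) - S)^2) := by
    intro z _
    apply mul_le_mul_of_nonneg_left _ (hp z)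
    set n := ∑ i, zr z i with hn
    by_cases h : S/2 < n
    · have h1 : Real.exp (-c*n) ≤ Real.exp (-(c/2)*S) := by
        apply Real.exp_le_exp.mpr
        nlinarith
      have h2 : 0 ≤ (4/S^2) * (n - S)^2 := by positivity
      linarith
    · push_neg at h
      have h1 : Real.exp (-c*n) ≤ 1 := by
        rw [Real.exp_le_one_iff]
        nlinarith [hN1 z]
      have h2 : (1:ℝ) ≤ (4/S^2)*(n-S)^2 := by
        rw [div_mul_eq_mul_div, le_div_iff₀ (by positivity)]
        nlinarith
      have h3 : 0 ≤ Real.exp (-(c/2)*S) := Real.exp_nonneg _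
      linarith
  calc designExp p (fun z => Real.exp (-c * ∑ i, zr z i))
      ≤ ∑ z, p z * (Real.exp (-(c/2)*S) + (4/S^2) * ((∑ i, zr z i) - S)^2) :=
        Finset.sum_le_sum key
    _ = Real.exp (-(c/2)*S) * (∑ z, p z)
        + (4/S^2) * ∑ z, p z * ((∑ i, zr z i) - S)^2 := by
        have e : ∀ z : Fin N → Bool,
            p z * (Real.exp (-(c/2)*S) + (4/S^2) * ((∑ i, zr z i) - S)^2)
            = Real.exp (-(c/2)*S) * p z
              + (4/S^2) * (p z * ((∑ i, zr z i) - S)^2) := fun z => by ring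
        simp_rw [e]
        rw [Finset.sum_add_distrib, ← Finset.mul_sum, ← Finset.mul_sum]
    _ = Real.exp (-(c/2)*S) + (4/S^2) * ∑ i, ∑ j, Cov i j := by
        rw [hsum, hvar, mul_one]
end
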